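/- Let P = ⟨?x, e, ?y⟩ be a PP pattern whose subject ?x and object ?y are both variables, and let X be a set of variables. If CBV(P | X) = vars(P), then ?x ∈ X or ?y ∈ X. -/

import Mathlib

/-- SPARQL property path expressions. -/
inductive PPE : Type where
  | iri : String → PPE
  | neg : List String → PPE
  | inv : PPE → PPE
  | seq : PPE → PPE → PPE
  | alt : PPE → PPE → PPE
  | star : PPE → PPE

/-- Subject/object terms of a property path pattern: IRIs, literals, or variables
(variables are natural numbers). -/
inductive Trm : Type where
  | iri : String → Trm
  | lit : String → Trm
  | var : ℕ → Trm

/-- Graph patterns: property path patterns closed under AND, UNION, OPT. -/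
inductive GP : Type where
  | pp : Trm → PPE → Trm → GP
  | and : GP → GP → GP
  | union : GP → GP → GP
  | opt : GP → GP → GP

def Trm.vars : Trm → Set ℕ
  | .var v => {v}
  | _ => ∅

/-- All variables occurring in a graph pattern. -/
def GP.vars : GP → Set ℕ
  | .pp a _ b => a.vars ∪ b.vars
  | .and P Q => P.vars ∪ Q.vars
  | .union P Q => P.vars ∪ Q.vars
  | .opt P Q => P.vars ∪ Q.vars

/-- Strongly bound variables. -/
def GP.cvars : GP → Set ℕ
  | .pp a _ b => a.vars ∪ b.vars
  | .and P Q => P.cvars ∪ Q.cvars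
  | .union P Q => P.cvars ∩ Q.cvars
  | .opt P _ => P.cvars

/-- A term is an IRI, a literal, or a variable belonging to `X`. -/
def Trm.boundIn : Trm → Set ℕ → Prop
  | .var v, X => v ∈ X
  | _, _ => True

def Trm.isVar : Trm → Prop
  | .var _ => True
  | _ => False

def PPE.size : PPE → ℕ
  | .iri _ => 1
  | .neg _ => 1
  | .inv e => 1 + e.size
  | .seq e f => 1 + e.size + f.size
  | .alt e f => 1 + e.size + f.size
  | .star e => 2 + e.size

def GP.size : GP → ℕ
  | .pp _ e _ => 3 * e.size
  | .and P Q => 1 + P.size + Q.size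
  | .union P Q => 1 + P.size + Q.size
  | .opt P Q => 1 + P.size + Q.size

attribute [local instance] Classical.propDecidable

/-- Conditionally Web-bounded variables `CBV(P | X)` (Definition 5 of Hartig & Pirrò).
The case of a star pattern with variable subject and non-variable object, which the
definition reduces to the swapped pattern `⟨β,(^e)*,α⟩`, is inlined (the swapped
pattern has a non-variable subject, so its value is given by the subsequent cases). -/
noncomputable def CBV : GP → Set ℕ → Set ℕ
  | .pp a (.iri u) b, X => if a.boundIn X then (GP.pp a (.iri u) b).vars else ∅
  | .pp a (.neg l) b, X => if a.boundIn X then (GP.pp a (.neg l) b).vars else ∅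
  | .pp a (.inv e) b, X => CBV (.pp b e a) X
  | .pp a (.alt e f) b, X => CBV (.union (.pp a e b) (.pp a f b)) X
  | .pp a (.seq e f) b, X =>
      if h : ∃ v : ℕ, v ∉ X ∧ Trm.var v ≠ a ∧ Trm.var v ≠ b ∧
          v ∈ CBV (.and (.pp a e (.var v)) (.pp (.var v) f b)) X then
        CBV (.and (.pp a e (.var h.choose)) (.pp (.var h.choose) f b)) X \ {h.choose}
      else ∅
  | .pp a (.star e) b, X =>
      if a.isVar ∧ ¬ b.isVar then
        (if ∀ x y : ℕ, CBV (.pp (.var x) (.inv e) (.var y)) {x} = {x, y} then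
          CBV (.pp b (.inv e) a) X
        else ∅)
      else
        (if ∀ x y : ℕ, CBV (.pp (.var x) e (.var y)) {x} = {x, y} then
          CBV (.pp a e b) X
        else ∅)
  | .and P Q, X =>
      if (CBV P X = P.vars ∧ CBV Q X = Q.vars) ∨
         (CBV P X = P.vars ∧ CBV Q (X ∪ P.cvars) = Q.vars) ∨
         (CBV Q X = Q.vars ∧ CBV P (X ∪ Q.cvars) = P.vars) then
        (GP.and P Q).vars
      else ∅
  | .union P Q, X => CBV P X ∩ CBV Q X
  | .opt P Q, X =>
      if (CBV P X = P.vars ∧ CBV Q X = Q.vars) ∨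
         (CBV P X = P.vars ∧ CBV Q (X ∪ P.cvars) = Q.vars) then
        (GP.opt P Q).vars
      else ∅
termination_by P _ => P.size
decreasing_by all_goals simp only [GP.size, PPE.size]; omega


/- A pattern `⟨?x, e, ?y⟩` with neither endpoint in `X` has no conditionally bounded variables at
all, by induction on `e`: in the base cases the subject is an unbound variable; inverse, alternative
and star only reshuffle the endpoints; and for `e₁/e₂` the middle variable `?v` is required to lie
outside `X`, so neither conjunct of `⟨?x,e₁,?v⟩ AND ⟨?v,e₂,?y⟩` is fully bounded. As `x ∈ vars(P)`,
`CBV(P | X) = vars(P)` is then impossible. -/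

lemma GP.mem_vars_pp_var_left (x : ℕ) (e : PPE) (b : Trm) : x ∈ (GP.pp (.var x) e b).vars := by
  simp [GP.vars, Trm.vars]

lemma CBV_and_eq_empty {P Q : GP} {X : Set ℕ} (hP : CBV P X ≠ P.vars) (hQ : CBV Q X ≠ Q.vars) :
    CBV (.and P Q) X = ∅ := by
  rw [CBV, if_neg]
  tauto

lemma CBV_ne_vars_of_eq_empty {x : ℕ} {e : PPE} {b : Trm} {X : Set ℕ}
    (h : CBV (GP.pp (.var x) e b) X = ∅) : CBV (GP.pp (.var x) e b) X ≠ (GP.pp (.var x) e b).vars :=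
  fun h' => by simpa [← h', h] using GP.mem_vars_pp_var_left x e b

lemma CBV_pp_var_var_eq_empty (e : PPE) {x y : ℕ} {X : Set ℕ} (hx : x ∉ X) (hy : y ∉ X) :
    CBV (GP.pp (.var x) e (.var y)) X = ∅ := by
  induction e generalizing x y with
  | iri u => simp only [CBV, Trm.boundIn, hx, if_false]
  | neg l => simp only [CBV, Trm.boundIn, hx, if_false]
  | inv e ih => simp only [CBV, ih hy hx]
  | alt e f ihe ihf => simp only [CBV, ihe hx hy, ihf hx hy, Set.inter_self]
  | seq e f ihe ihf =>
    rw [CBV, dif_neg]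
    rintro ⟨v, hv, -, -, hmem⟩
    rw [CBV_and_eq_empty (CBV_ne_vars_of_eq_empty (ihe hx hv))
      (CBV_ne_vars_of_eq_empty (ihf hv hy))] at hmem
    exact hmem
  | star e ih =>
    simp only [CBV, Trm.isVar, not_true, and_false, if_false]
    split_ifs <;> simp only [ih hx hy]

/-- If `P = ⟨?x, e, ?y⟩` has variables in both subject and object position and
`CBV(P | X) = vars(P)`, then `?x ∈ X` or `?y ∈ X`. -/
theorem CBV_eq_vars_of_two_vars (e : PPE) (x y : ℕ) (X : Set ℕ)
    (h : CBV (GP.pp (.var x) e (.var y)) X = (GP.pp (.var x) e (.var y)).vars) :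
    x ∈ X ∨ y ∈ X := by
  by_contra! hxy
  exact CBV_ne_vars_of_eq_empty (CBV_pp_var_var_eq_empty e hxy.1 hxy.2) h
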